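/- Let A be an N×N real matrix all of whose (complex) eigenvalues have absolute value greater than one, let C be an M×N real matrix with M < N such that the observability matrix (C; CA; …; CA^{N−1}) has rank N, and let 0 < p < 1. Suppose there exists a C¹ observer gain K : ℝ^M → ℝ^N with K(0)=0 such that the observer error dynamics e_{t+1} = A e_t − ξ_t·(K(C x_t) − K(C(x_t − e_t))), along x_{t+1} = A x_t, is MSE stable: there exist L < ∞, 0 < β < 1 with E_{ξ_0^t}[‖e_{t+1}‖²] ≤ L β^t ‖e_0‖² for all x_0, e_0 ∈ ℝ^N and t ≥ 0. Then (1−p)^M · (det A)² < 1; equivalently, (1−p)^M · (∏_{k=1}^N |λ_k|)² < 1 where λ_1,…,λ_N are the eigenvalues of A. -/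

import Mathlib

open Matrix Polynomial

noncomputable section

abbrev Euc (n : ℕ) := EuclideanSpace ℝ (Fin n)

/-- Expectation over i.i.d. Bernoulli(p) erasure prefixes (ξ_0,…,ξ_t). -/
def erasureExp (p : ℝ) (t : ℕ) (G : (ℕ → Bool) → ℝ) : ℝ :=
  ∑ s : Fin (t + 1) → Bool,
    (∏ i, if s i then p else 1 - p) *
      G (fun n => if h : n < t + 1 then s ⟨n, h⟩ else false)

variable {N M : ℕ}

/-- Observer error dynamics `e_{t+1} = A e_t − ξ_t (K(C x_t) − K(C(x_t − e_t)))`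
along `x_{t+1} = A x_t`. -/
def errSeqLin (A : Matrix (Fin N) (Fin N) ℝ) (C : Matrix (Fin M) (Fin N) ℝ)
    (K : Euc M → Euc N) (x0 e0 : Euc N) (ξ : ℕ → Bool) : ℕ → Euc N
  | 0 => e0
  | t + 1 =>
      toEuclideanLin A (errSeqLin A C K x0 e0 ξ t) -
        (if ξ t then (1 : ℝ) else 0) •
          (K (toEuclideanLin C (toEuclideanLin (A ^ t) x0)) -
            K (toEuclideanLin C
                (toEuclideanLin (A ^ t) x0 - errSeqLin A C K x0 e0 ξ t)))

/-!
Linearise the error dynamics at `x₀ = 0`, `e₀ = 0`: if `B` is the Jacobian of `K` at `0`, the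
error is to first order `Φ_t e₀`, where `Φ_t` is a random product of the matrices `A` (erasure)
and `A - B C` (measurement received). Letting `e₀ → 0` turns MSE stability into
`E ‖Φ_{t+1} v‖² ≤ L β^t ‖v‖²`: the second-moment matrices `S_t = E[Φ_tᵀ Φ_t]` satisfy
`S_{t+1} ≤ L β^t I`, so `det S_{t+1} ≤ (L β^t)^N → 0`.

On the other hand `S_{t+1} = p (A - B C)ᵀ S_t (A - B C) + (1 - p) Aᵀ S_t A`. Relative to
`Aᵀ S_t A` this matrix is `≥ 1 - p` everywhere and `≥ 1` on `ker C`, a subspace of codimension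
at most `M`; so at most `M` of its relative eigenvalues lie below `1`, and
`det S_{t+1} ≥ (1 - p)^M det(A)² det S_t`. Hence `((1 - p)^M det(A)²)^t ≤ det S_t`, which
forces `(1 - p)^M det(A)² < 1`.
-/

lemma dotProduct_conjTranspose_mul_mul_mulVec {m n : Type*} [Fintype m] [Fintype n]
    (B : Matrix m n ℝ) (H : Matrix m m ℝ) (x : n → ℝ) :
    x ⬝ᵥ ((Bᴴ * H * B) *ᵥ x) = (B *ᵥ x) ⬝ᵥ (H *ᵥ (B *ᵥ x)) := by
  rw [← mulVec_mulVec, ← mulVec_mulVec, dotProduct_mulVec, conjTranspose_eq_transpose_of_trivial,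
    vecMul_transpose]

section Spectral
variable {n : Type*} [Fintype n] [DecidableEq n]

lemma dotProduct_mul_diagonal_mul_conjTranspose_mulVec (U : Matrix n n ℝ) (d x : n → ℝ) :
    x ⬝ᵥ ((U * diagonal d * Uᴴ) *ᵥ x) = ∑ i, d i * (Uᴴ *ᵥ x) i ^ 2 := by
  have := dotProduct_conjTranspose_mul_mul_mulVec Uᴴ (diagonal d) x
  rw [conjTranspose_conjTranspose] at this
  rw [this]
  simp [dotProduct, mulVec_diagonal, sq, mul_left_comm]

namespace Matrix.IsHermitian
variable {H : Matrix n n ℝ} (hH : H.IsHermitian)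

def eigenCoord : (n → ℝ) →ₗ[ℝ] (n → ℝ) :=
  (star (hH.eigenvectorUnitary : Matrix n n ℝ)).mulVecLin

lemma dotProduct_mulVec_eq_sum (x : n → ℝ) :
    x ⬝ᵥ (H *ᵥ x) = ∑ i, hH.eigenvalues i * hH.eigenCoord x i ^ 2 := by
  conv_lhs => rw [hH.spectral_theorem, Unitary.conjStarAlgAut_apply]
  simp only [RCLike.ofReal_real_eq_id, Function.id_comp]
  exact dotProduct_mul_diagonal_mul_conjTranspose_mulVec _ _ x

lemma dotProduct_self_eq_sum (x : n → ℝ) : x ⬝ᵥ x = ∑ i, hH.eigenCoord x i ^ 2 := by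
  have := dotProduct_mul_diagonal_mul_conjTranspose_mulVec
    (hH.eigenvectorUnitary : Matrix n n ℝ) (fun _ => 1) x
  rw [diagonal_one, mul_one, ← star_eq_conjTranspose,
    Unitary.mul_star_self_of_mem hH.eigenvectorUnitary.2, one_mulVec] at this
  simpa [eigenCoord] using this

lemma eigenCoord_injective : Function.Injective hH.eigenCoord := by
  rw [← LinearMap.ker_eq_bot, LinearMap.ker_eq_bot']
  intro x hx
  simpa [← hH.dotProduct_self_eq_sum, hx] using hH.dotProduct_self_eq_sum x

lemma eigenCoord_eigenvectorBasis (i : n) :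
    hH.eigenCoord (hH.eigenvectorBasis i) = Pi.single i 1 :=
  hH.star_eigenvectorUnitary_mulVec i

lemma le_eigenvalues {c : ℝ} (h : ∀ x, c * (x ⬝ᵥ x) ≤ x ⬝ᵥ (H *ᵥ x)) (i : n) :
    c ≤ hH.eigenvalues i := by
  simpa [hH.dotProduct_mulVec_eq_sum, hH.dotProduct_self_eq_sum, eigenCoord_eigenvectorBasis,
    Pi.single_apply] using h (hH.eigenvectorBasis i)

lemma eigenvalues_le {c : ℝ} (h : ∀ x, x ⬝ᵥ (H *ᵥ x) ≤ c * (x ⬝ᵥ x)) (i : n) :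
    hH.eigenvalues i ≤ c := by
  simpa [hH.dotProduct_mulVec_eq_sum, hH.dotProduct_self_eq_sum, eigenCoord_eigenvectorBasis,
    Pi.single_apply] using h (hH.eigenvectorBasis i)

lemma card_eigenvalues_lt_one_add_finrank_le (W : Submodule ℝ (n → ℝ))
    (hW : ∀ x ∈ W, x ⬝ᵥ x ≤ x ⬝ᵥ (H *ᵥ x)) :
    Fintype.card {i // hH.eigenvalues i < 1} + Module.finrank ℝ W ≤ Fintype.card n := by
  let θ : W →ₗ[ℝ] ({i // ¬ hH.eigenvalues i < 1} → ℝ) :=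
    LinearMap.funLeft ℝ ℝ Subtype.val ∘ₗ hH.eigenCoord ∘ₗ W.subtype
  have hθ : Function.Injective θ := by
    rw [← LinearMap.ker_eq_bot, LinearMap.ker_eq_bot']
    rintro ⟨x, hxW⟩ hx
    have hlarge : ∀ i, ¬ hH.eigenvalues i < 1 → hH.eigenCoord x i = 0 := fun i hi =>
      congr_fun hx ⟨i, hi⟩
    -- on `W` the weights `1 - λᵢ` of the nonzero coordinates are positive, yet sum to `≤ 0`
    have hsum : ∑ i, (1 - hH.eigenvalues i) * hH.eigenCoord x i ^ 2 ≤ 0 := by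
      have := hW x hxW
      rw [hH.dotProduct_mulVec_eq_sum, hH.dotProduct_self_eq_sum] at this
      simpa [sub_mul, Finset.sum_sub_distrib] using this
    have hterm : ∀ i, 0 ≤ (1 - hH.eigenvalues i) * hH.eigenCoord x i ^ 2 := fun i => by
      by_cases hi : hH.eigenvalues i < 1
      · exact mul_nonneg (by linarith) (sq_nonneg _)
      · simp [hlarge i hi]
    have hzero : hH.eigenCoord x = 0 := by
      funext i
      by_cases hi : hH.eigenvalues i < 1
      · have := (Finset.sum_eq_zero_iff_of_nonneg fun i _ => hterm i).mp
          (le_antisymm hsum (Finset.sum_nonneg fun i _ => hterm i)) i (Finset.mem_univ i)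
        simpa [(sub_pos.mpr hi).ne'] using this
      · exact hlarge i hi
    exact Subtype.ext (hH.eigenCoord_injective (hzero.trans (map_zero _).symm))
  have := LinearMap.finrank_le_finrank_of_injective hθ
  rw [Module.finrank_fintype_fun_eq_card, Fintype.card_subtype_compl] at this
  have := Fintype.card_subtype_le fun i => hH.eigenvalues i < 1
  omega

end Matrix.IsHermitian

lemma Matrix.IsHermitian.pow_le_det {H : Matrix n n ℝ} (hH : H.IsHermitian) {q : ℝ}
    (hq0 : 0 ≤ q) (hq1 : q ≤ 1) (hq : ∀ x, q * (x ⬝ᵥ x) ≤ x ⬝ᵥ (H *ᵥ x))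
    (W : Submodule ℝ (n → ℝ)) (hW : ∀ x ∈ W, x ⬝ᵥ x ≤ x ⬝ᵥ (H *ᵥ x)) {k : ℕ}
    (hk : Fintype.card n ≤ Module.finrank ℝ W + k) : q ^ k ≤ H.det := by
  have hcard := hH.card_eigenvalues_lt_one_add_finrank_le W hW
  rw [Fintype.card_subtype] at hcard
  calc q ^ k ≤ q ^ (Finset.univ.filter fun i => hH.eigenvalues i < 1).card :=
        pow_le_pow_of_le_one hq0 hq1 (by omega)
    _ = ∏ i, if hH.eigenvalues i < 1 then q else 1 := by
        rw [Finset.prod_ite, Finset.prod_const, Finset.prod_const_one, mul_one]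
    _ ≤ ∏ i, hH.eigenvalues i := by
        refine Finset.prod_le_prod (fun i _ => by split_ifs <;> linarith) fun i _ => ?_
        split_ifs with hi
        · exact hH.le_eigenvalues hq i
        · exact not_lt.mp hi
    _ = H.det := by simp [hH.det_eq_prod_eigenvalues]

lemma Matrix.IsHermitian.pow_mul_det_le_det_of_isUnit {H Y : Matrix n n ℝ} (hH : H.IsHermitian)
    (hY : IsUnit Y.det) {q : ℝ} (hq0 : 0 ≤ q) (hq1 : q ≤ 1)
    (hq : ∀ x, q * (x ⬝ᵥ ((Yᴴ * Y) *ᵥ x)) ≤ x ⬝ᵥ (H *ᵥ x)) (W : Submodule ℝ (n → ℝ))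
    (hW : ∀ x ∈ W, x ⬝ᵥ ((Yᴴ * Y) *ᵥ x) ≤ x ⬝ᵥ (H *ᵥ x)) {k : ℕ}
    (hk : Fintype.card n ≤ Module.finrank ℝ W + k) : q ^ k * (Yᴴ * Y).det ≤ H.det := by
  set Z := Y⁻¹
  have hZY : Z * Y = 1 := nonsing_inv_mul Y hY
  have hYZ : Y * Z = 1 := mul_nonsing_inv Y hY
  set H' := Zᴴ * H * Z
  have hdet : H.det = (Yᴴ * Y).det * H'.det := by
    have : H = Yᴴ * H' * Y := by
      simp only [H', ← mul_assoc, ← conjTranspose_mul, hZY, conjTranspose_one, one_mul]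
      rw [mul_assoc, hZY, mul_one]
    conv_lhs => rw [this]
    simp only [det_mul]
    ring
  have hquad : ∀ x, x ⬝ᵥ (H' *ᵥ x) = (Z *ᵥ x) ⬝ᵥ (H *ᵥ (Z *ᵥ x)) :=
    dotProduct_conjTranspose_mul_mul_mulVec Z H
  have hYY : ∀ x, x ⬝ᵥ ((Yᴴ * Y) *ᵥ x) = (Y *ᵥ x) ⬝ᵥ (Y *ᵥ x) := fun x => by
    simpa using dotProduct_conjTranspose_mul_mul_mulVec Y 1 x
  rw [hdet, mul_comm]
  refine mul_le_mul_of_nonneg_left ((isHermitian_conjTranspose_mul_mul Z hH).pow_le_det hq0 hq1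
    (W := W.map Y.mulVecLin) ?_ ?_ ?_) (posSemidef_conjTranspose_mul_self Y).det_nonneg
  · intro x
    have := hq (Z *ᵥ x)
    rwa [hYY, mulVec_mulVec, hYZ, one_mulVec, ← hquad] at this
  · rintro _ ⟨y, hy, rfl⟩
    have := hW y hy
    rw [hYY] at this
    rwa [mulVecLin_apply, hquad, mulVec_mulVec, hZY, one_mulVec]
  · rwa [← LinearEquiv.finrank_eq (W.equivMapOfInjective _
      (mulVec_injective_iff_isUnit.mpr ((isUnit_iff_isUnit_det Y).mpr hY)))]

open scoped MatrixOrder in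
lemma Matrix.IsHermitian.pow_mul_det_le_det {H T : Matrix n n ℝ} (hH : H.IsHermitian)
    (hT : T.PosSemidef) {q : ℝ} (hq0 : 0 ≤ q) (hq1 : q ≤ 1)
    (hq : ∀ x, q * (x ⬝ᵥ (T *ᵥ x)) ≤ x ⬝ᵥ (H *ᵥ x)) (W : Submodule ℝ (n → ℝ))
    (hW : ∀ x ∈ W, x ⬝ᵥ (T *ᵥ x) ≤ x ⬝ᵥ (H *ᵥ x)) {k : ℕ}
    (hk : Fintype.card n ≤ Module.finrank ℝ W + k) : q ^ k * T.det ≤ H.det := by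
  by_cases hTdet : T.det = 0
  · have hHpsd : H.PosSemidef := .of_dotProduct_mulVec_nonneg hH fun x => by
      simpa using (mul_nonneg hq0 (by simpa using hT.dotProduct_mulVec_nonneg x)).trans (hq x)
    simpa [hTdet] using hHpsd.det_nonneg
  -- writing `T = Yᴴ Y` with `Y` invertible, congruence by `Y⁻¹` reduces to the case `T = 1`
  obtain ⟨Y, rfl⟩ : ∃ Y : Matrix n n ℝ, T = Yᴴ * Y :=
    CStarAlgebra.nonneg_iff_eq_star_mul_self.mp hT.nonneg
  exact hH.pow_mul_det_le_det_of_isUnit (isUnit_iff_ne_zero.mpr fun h => hTdet (by simp [h]))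
    hq0 hq1 hq W hW hk

lemma Matrix.PosSemidef.det_le_pow {H : Matrix n n ℝ} (hH : H.PosSemidef) {c : ℝ}
    (h : ∀ x, x ⬝ᵥ (H *ᵥ x) ≤ c * (x ⬝ᵥ x)) : H.det ≤ c ^ Fintype.card n := by
  rw [hH.isHermitian.det_eq_prod_eigenvalues, ← Finset.card_univ, ← Finset.prod_const]
  exact Finset.prod_le_prod (fun i _ => by simpa using hH.eigenvalues_nonneg i)
    fun i _ => by simpa using hH.isHermitian.eigenvalues_le h i

end Spectral

section SecondMoment
variable {n m : Type*} [Fintype n] [Fintype m]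

-- `b = true` means the measurement arrives, and then the linearised error step is `Â = A - B C`.
def stepMatrix (A Â : Matrix n n ℝ) (b : Bool) : Matrix n n ℝ := if b then Â else A

def stepProd [DecidableEq n] (A Â : Matrix n n ℝ) (ξ : ℕ → Bool) : ℕ → Matrix n n ℝ
  | 0 => 1
  | t + 1 => stepMatrix A Â (ξ t) * stepProd A Â ξ t

def secondMomentStep (p : ℝ) (A Â Q : Matrix n n ℝ) : Matrix n n ℝ :=
  p • (Âᴴ * Q * Â) + (1 - p) • (Aᴴ * Q * A)

def padFalse {T : ℕ} (s : Fin T → Bool) : ℕ → Bool :=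
  fun k => if h : k < T then s ⟨k, h⟩ else false

lemma stepProd_congr [DecidableEq n] (A Â : Matrix n n ℝ) {ξ ξ' : ℕ → Bool} {t : ℕ}
    (h : ∀ i < t, ξ i = ξ' i) : stepProd A Â ξ t = stepProd A Â ξ' t := by
  induction t with
  | zero => rfl
  | succ t ih =>
    rw [stepProd, stepProd, h t t.lt_succ_self, ih fun i hi => h i (hi.trans t.lt_succ_self)]

lemma stepProd_padFalse_snoc [DecidableEq n] (A Â : Matrix n n ℝ) {T : ℕ} (s : Fin T → Bool)
    (b : Bool) :
    stepProd A Â (padFalse (Fin.snoc s b : Fin (T + 1) → Bool)) (T + 1) =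
      stepMatrix A Â b * stepProd A Â (padFalse s) T := by
  have hlast : padFalse (Fin.snoc s b : Fin (T + 1) → Bool) T = b := by
    simp [padFalse, Fin.snoc]
  have hinit : ∀ i < T, padFalse (Fin.snoc s b : Fin (T + 1) → Bool) i = padFalse s i := by
    intro i hi
    simp [padFalse, hi, Nat.lt_succ_of_lt hi, Fin.snoc, Fin.castLT]
  rw [stepProd, hlast, stepProd_congr A Â hinit]

lemma dotProduct_secondMomentStep_mulVec (p : ℝ) (A Â Q : Matrix n n ℝ) (x : n → ℝ) :
    x ⬝ᵥ (secondMomentStep p A Â Q *ᵥ x) =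
      p * ((Â *ᵥ x) ⬝ᵥ (Q *ᵥ (Â *ᵥ x))) + (1 - p) * ((A *ᵥ x) ⬝ᵥ (Q *ᵥ (A *ᵥ x))) := by
  simp only [secondMomentStep, add_mulVec, smul_mulVec, dotProduct_add, dotProduct_smul,
    dotProduct_conjTranspose_mul_mul_mulVec, smul_eq_mul]

lemma sum_bernoulli_snoc (p : ℝ) {T : ℕ} (F : (Fin (T + 1) → Bool) → ℝ) :
    ∑ s : Fin (T + 1) → Bool, (∏ i, if s i then p else 1 - p) * F s =
      ∑ s : Fin T → Bool, (∏ i, if s i then p else 1 - p) *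
        ∑ b : Bool, (if b then p else 1 - p) * F (Fin.snoc s b) := by
  rw [← (Fin.snocEquiv fun _ => Bool).sum_comp, Fintype.sum_prod_type, Finset.sum_comm]
  refine Finset.sum_congr rfl fun s _ => ?_
  rw [Finset.mul_sum]
  refine Finset.sum_congr rfl fun b _ => ?_
  change (∏ i, if (Fin.snoc s b : Fin (T + 1) → Bool) i then p else 1 - p) *
    F (Fin.snoc s b) = _
  simp only [Fin.prod_univ_castSucc, Fin.snoc_castSucc, Fin.snoc_last]
  ring

-- Averaging over the last erasure first turns `Q` into `secondMomentStep p A Â Q`.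
lemma sum_bernoulli_dotProduct_stepProd [DecidableEq n] (p : ℝ) (A Â : Matrix n n ℝ)
    (T : ℕ) (Q : Matrix n n ℝ) (v : n → ℝ) :
    ∑ s : Fin T → Bool, (∏ i, if s i then p else 1 - p) *
        ((stepProd A Â (padFalse s) T *ᵥ v) ⬝ᵥ (Q *ᵥ (stepProd A Â (padFalse s) T *ᵥ v))) =
      v ⬝ᵥ ((secondMomentStep p A Â)^[T] Q *ᵥ v) := by
  induction T generalizing Q with
  | zero => simp [stepProd]
  | succ T ih =>
    rw [Function.iterate_succ_apply, ← ih, sum_bernoulli_snoc]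
    refine Finset.sum_congr rfl fun s _ => ?_
    simp only [stepProd_padFalse_snoc, ← mulVec_mulVec, Fintype.sum_bool, stepMatrix,
      dotProduct_secondMomentStep_mulVec, if_true, Bool.false_eq_true, if_false]

lemma secondMomentStep_posSemidef {p : ℝ} (hp0 : 0 ≤ p) (hp1 : p ≤ 1) (A Â : Matrix n n ℝ)
    {Q : Matrix n n ℝ} (hQ : Q.PosSemidef) : (secondMomentStep p A Â Q).PosSemidef :=
  ((hQ.conjTranspose_mul_mul_same Â).smul hp0).add
    ((hQ.conjTranspose_mul_mul_same A).smul (sub_nonneg.mpr hp1))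

lemma iterate_secondMomentStep_posSemidef [DecidableEq n] {p : ℝ} (hp0 : 0 ≤ p) (hp1 : p ≤ 1)
    (A Â : Matrix n n ℝ) (T : ℕ) : ((secondMomentStep p A Â)^[T] 1).PosSemidef := by
  induction T with
  | zero => exact PosSemidef.one
  | succ T ih =>
    rw [Function.iterate_succ_apply']
    exact secondMomentStep_posSemidef hp0 hp1 A Â ih

lemma pow_mul_det_le_det_secondMomentStep [DecidableEq n] {p : ℝ} (hp0 : 0 ≤ p) (hp1 : p ≤ 1)
    (A : Matrix n n ℝ) (B : Matrix n m ℝ) (C : Matrix m n ℝ) {Q : Matrix n n ℝ}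
    (hQ : Q.PosSemidef) :
    (1 - p) ^ Fintype.card m * (A.det ^ 2 * Q.det) ≤
      (secondMomentStep p A (A - B * C) Q).det := by
  have hdet : (Aᴴ * Q * A).det = A.det ^ 2 * Q.det := by
    simp only [det_mul, det_conjTranspose, star_trivial]
    ring
  rw [← hdet]
  -- on `ker C` the step `A - B * C` agrees with `A`, and `ker C` has codimension at most `m`
  refine (secondMomentStep_posSemidef hp0 hp1 _ _ hQ).isHermitian.pow_mul_det_le_det
    (hQ.conjTranspose_mul_mul_same A) (sub_nonneg.mpr hp1) (by linarith) ?_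
    (LinearMap.ker C.mulVecLin) ?_ ?_
  · intro x
    have := hQ.dotProduct_mulVec_nonneg ((A - B * C) *ᵥ x)
    rw [star_trivial] at this
    rw [dotProduct_secondMomentStep_mulVec, dotProduct_conjTranspose_mul_mul_mulVec]
    nlinarith
  · intro x hx
    rw [LinearMap.mem_ker, mulVecLin_apply] at hx
    rw [dotProduct_secondMomentStep_mulVec, dotProduct_conjTranspose_mul_mul_mulVec, sub_mulVec,
      ← mulVec_mulVec, hx, mulVec_zero, sub_zero]
    linarith
  · have hrank := LinearMap.finrank_range_add_finrank_ker C.mulVecLin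
    have hrange := Submodule.finrank_le (LinearMap.range C.mulVecLin)
    rw [Module.finrank_fintype_fun_eq_card] at hrank hrange
    omega

lemma pow_le_det_iterate_secondMomentStep [DecidableEq n] {p : ℝ} (hp0 : 0 ≤ p) (hp1 : p ≤ 1)
    (A : Matrix n n ℝ) (B : Matrix n m ℝ) (C : Matrix m n ℝ) (T : ℕ) :
    ((1 - p) ^ Fintype.card m * A.det ^ 2) ^ T ≤
      ((secondMomentStep p A (A - B * C))^[T] 1).det := by
  induction T with
  | zero => simp
  | succ T ih =>
    rw [Function.iterate_succ_apply', pow_succ', mul_assoc]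
    refine le_trans ?_ (pow_mul_det_le_det_secondMomentStep hp0 hp1 A B C
      (iterate_secondMomentStep_posSemidef hp0 hp1 _ _ T))
    have := sub_nonneg.mpr hp1
    gcongr

end SecondMoment

open Filter Topology

lemma sum_mul_norm_sq_le_of_hasDerivAt {ι E : Type*} [Fintype ι] [NormedAddCommGroup E]
    [NormedSpace ℝ E] {f : ι → ℝ → E} {f' : ι → E} (w : ι → ℝ) {c : ℝ} (hf0 : ∀ i, f i 0 = 0)
    (hf : ∀ i, HasDerivAt (f i) (f' i) 0)
    (hc : ∀ ε ≠ 0, ∑ i, w i * ‖f i ε‖ ^ 2 ≤ c * ε ^ 2) :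
    ∑ i, w i * ‖f' i‖ ^ 2 ≤ c := by
  have hslope : ∀ i, Tendsto (fun ε => ε⁻¹ • f i ε) (𝓝[≠] 0) (𝓝 (f' i)) :=
    fun i => (hf i).tendsto_slope.congr fun ε => by simp [slope_def_module, hf0]
  refine le_of_tendsto
    (tendsto_finsetSum _ fun i _ => ((hslope i).norm.pow 2).const_mul (w i)) ?_
  filter_upwards [self_mem_nhdsWithin] with ε (hε : ε ≠ 0)
  calc ∑ i, w i * ‖ε⁻¹ • f i ε‖ ^ 2 = (ε ^ 2)⁻¹ * ∑ i, w i * ‖f i ε‖ ^ 2 := by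
        simp only [norm_smul, mul_pow, norm_inv, Real.norm_eq_abs, sq_abs, inv_pow,
          Finset.mul_sum]
        exact Finset.sum_congr rfl fun i _ => by ring
    _ ≤ (ε ^ 2)⁻¹ * (c * ε ^ 2) := by gcongr; exact hc ε hε
    _ = c := by field_simp

def gainJacobian (K : Euc M → Euc N) : Matrix (Fin N) (Fin M) ℝ :=
  toEuclideanLin.symm (fderiv ℝ K 0 : Euc M →ₗ[ℝ] Euc N)

section Linearization
variable (A : Matrix (Fin N) (Fin N) ℝ) (C : Matrix (Fin M) (Fin N) ℝ) {K : Euc M → Euc N}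

lemma errSeqLin_zero_zero (hK0 : K 0 = 0) (ξ : ℕ → Bool) (t : ℕ) :
    errSeqLin A C K 0 0 ξ t = 0 := by
  induction t with
  | zero => rfl
  | succ t ih => simp [errSeqLin, ih, hK0]

lemma hasDerivAt_errSeqLin_smul (hK : DifferentiableAt ℝ K 0) (hK0 : K 0 = 0) (ξ : ℕ → Bool)
    (v : Euc N) (t : ℕ) :
    HasDerivAt (fun ε : ℝ => errSeqLin A C K 0 (ε • v) ξ t)
      (toEuclideanLin (stepProd A (A - gainJacobian K * C) ξ t) v) 0 := by
  induction t with
  | zero => simpa [errSeqLin, stepProd] using (hasDerivAt_id (0 : ℝ)).smul_const v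
  | succ t ih =>
    set d := toEuclideanLin (stepProd A (A - gainJacobian K * C) ξ t) v
    have hC : HasDerivAt (fun ε : ℝ => toEuclideanLin C (0 - errSeqLin A C K 0 (ε • v) ξ t))
        (toEuclideanLin C (0 - d)) 0 :=
      (toEuclideanLin C).toContinuousLinearMap.hasFDerivAt.comp_hasDerivAt 0
        ((hasDerivAt_const 0 0).sub ih)
    have hK' : HasFDerivAt K (fderiv ℝ K 0)
        (toEuclideanLin C (0 - errSeqLin A C K 0 ((0 : ℝ) • v) ξ t)) := by
      simpa [errSeqLin_zero_zero A C hK0] using hK.hasFDerivAt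
    have hstep := ((toEuclideanLin A).toContinuousLinearMap.hasFDerivAt.comp_hasDerivAt 0 ih).sub
      (((hasDerivAt_const 0 (0 : Euc N)).sub (hK'.comp_hasDerivAt 0 hC)).const_smul
        (if ξ t then (1 : ℝ) else 0))
    have hB : ∀ x, fderiv ℝ K 0 x = toEuclideanLin (gainJacobian K) x := fun x => by
      simp [gainJacobian]
    have hderiv : toEuclideanLin (stepProd A (A - gainJacobian K * C) ξ (t + 1)) v =
        toEuclideanLin A d - (if ξ t then (1 : ℝ) else 0) •
          (0 - fderiv ℝ K 0 (toEuclideanLin C (0 - d))) := by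
      rcases Bool.eq_false_or_eq_true (ξ t) with h | h <;>
        simp [h, stepProd, stepMatrix, hB, d, sub_mul]
    simp only [errSeqLin, map_zero, hK0, hderiv]
    exact hstep

lemma dotProduct_iterate_secondMomentStep_le (hK : DifferentiableAt ℝ K 0) (hK0 : K 0 = 0)
    {p L β : ℝ}
    (hMSE : ∀ e0 t, erasureExp p t (fun ξ => ‖errSeqLin A C K 0 e0 ξ (t + 1)‖ ^ 2) ≤
      L * β ^ t * ‖e0‖ ^ 2) (t : ℕ) (v : Fin N → ℝ) :
    v ⬝ᵥ ((secondMomentStep p A (A - gainJacobian K * C))^[t + 1] 1 *ᵥ v) ≤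
      L * β ^ t * (v ⬝ᵥ v) := by
  have hnorm : ∀ x : Euc N, ‖x‖ ^ 2 = x.ofLp ⬝ᵥ x.ofLp := fun x => by
    rw [EuclideanSpace.real_norm_sq_eq]
    simp [dotProduct, sq]
  rw [← sum_bernoulli_dotProduct_stepProd]
  have := sum_mul_norm_sq_le_of_hasDerivAt
    (fun s : Fin (t + 1) → Bool => ∏ i, if s i then p else 1 - p)
    (f := fun s ε => errSeqLin A C K 0 (ε • WithLp.toLp 2 v) (padFalse s) (t + 1))
    (fun s => by simpa using errSeqLin_zero_zero A C hK0 (padFalse s) (t + 1))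
    (fun s => hasDerivAt_errSeqLin_smul A C hK hK0 _ _ _) (c := L * β ^ t * (v ⬝ᵥ v))
    fun ε _ => (hMSE _ t).trans_eq (by rw [norm_smul, mul_pow, hnorm]; simp; ring)
  simpa [hnorm] using this

end Linearization

lemma lt_one_of_pow_succ_le_mul_pow {γ c r : ℝ} (hr0 : 0 ≤ r) (hr1 : r < 1)
    (h : ∀ t, γ ^ (t + 1) ≤ c * r ^ t) : γ < 1 := by
  by_contra! hγ
  have hlim : Tendsto (fun t => c * r ^ t) atTop (𝓝 0) := by
    simpa using (tendsto_pow_atTop_nhds_zero_of_lt_one hr0 hr1).const_mul c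
  obtain ⟨t, ht⟩ := (hlim.eventually_lt_const one_pos).exists
  linarith [h t, one_le_pow₀ (n := t + 1) hγ]

lemma prod_map_norm_aroots_charpoly {n : Type*} [Fintype n] [DecidableEq n]
    (A : Matrix n n ℝ) : ((A.charpoly.aroots ℂ).map fun z => ‖z‖).prod = |A.det| := by
  rw [aroots_def, ← charpoly_map]
  calc _ = ‖(A.map (algebraMap ℝ ℂ)).charpoly.roots.prod‖ :=
        (map_multiset_prod (normHom : ℂ →*₀ ℝ) _).symm
    _ = |A.det| := by
      rw [← det_eq_prod_roots_charpoly, ← RingHom.mapMatrix_apply, ← RingHom.map_det]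
      simp

theorem linear_mse_necessary_condition_general
    (hMN : M < N)
    (A : Matrix (Fin N) (Fin N) ℝ) (C : Matrix (Fin M) (Fin N) ℝ)
    (p : ℝ) (hp0 : 0 < p) (hp1 : p < 1)
    (hstable : ∃ (K : Euc M → Euc N), ContDiff ℝ 1 K ∧ K 0 = 0 ∧
      ∃ (L β : ℝ), 0 < β ∧ β < 1 ∧
        ∀ (x0 e0 : Euc N) (t : ℕ),
          erasureExp p t (fun ξ => ‖errSeqLin A C K x0 e0 ξ (t + 1)‖ ^ 2) ≤
            L * β ^ t * ‖e0‖ ^ 2) :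
    (1 - p) ^ M * A.det ^ 2 < 1 ∧
    (1 - p) ^ M * (((A.charpoly.aroots ℂ).map (fun z : ℂ => ‖z‖)).prod) ^ 2 < 1 := by
  obtain ⟨K, hK, hK0, L, β, hβ0, hβ1, hMSE⟩ := hstable
  have hKdiff : DifferentiableAt ℝ K 0 := hK.differentiable one_ne_zero 0
  set S := fun T => (secondMomentStep p A (A - gainJacobian K * C))^[T] 1
  have hupper : ∀ t, (S (t + 1)).det ≤ L ^ N * (β ^ N) ^ t := fun t => by
    rw [← pow_mul, mul_comm N, pow_mul, ← mul_pow]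
    have := (iterate_secondMomentStep_posSemidef hp0.le hp1.le _ _ (t + 1)).det_le_pow
      (dotProduct_iterate_secondMomentStep_le A C hKdiff hK0 (fun e0 t => hMSE 0 e0 t) t)
    rwa [Fintype.card_fin] at this
  have hlower : ∀ T, ((1 - p) ^ M * A.det ^ 2) ^ T ≤ (S T).det := fun T => by
    simpa using pow_le_det_iterate_secondMomentStep hp0.le hp1.le A (gainJacobian K) C T
  have hγ : (1 - p) ^ M * A.det ^ 2 < 1 :=
    lt_one_of_pow_succ_le_mul_pow (by positivity) (pow_lt_one₀ hβ0.le hβ1 (by omega))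
      fun t => (hlower (t + 1)).trans (hupper t)
  exact ⟨hγ, by rwa [prod_map_norm_aroots_charpoly, sq_abs]⟩

/-- **linear systems.** If all eigenvalues of `A` have absolute value greater
than one, `(A, C)` is observable, and some C¹ observer gain renders the observer error
dynamics MSE stable over the Bernoulli(p) erasure channel, then
`(1−p)^M (det A)² < 1`, equivalently `(1−p)^M (∏_k |λ_k|)² < 1`. -/
theorem linear_mse_necessary_condition
    (hMN : M < N)
    (A : Matrix (Fin N) (Fin N) ℝ) (C : Matrix (Fin M) (Fin N) ℝ)
    (hEig : ∀ μ ∈ A.charpoly.aroots ℂ, 1 < ‖μ‖)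
    (hObs : (Matrix.of fun (q : Fin N × Fin M) (j : Fin N) =>
        (C * A ^ (q.1 : ℕ)) q.2 j : Matrix (Fin N × Fin M) (Fin N) ℝ).rank = N)
    (p : ℝ) (hp0 : 0 < p) (hp1 : p < 1)
    (hstable : ∃ (K : Euc M → Euc N), ContDiff ℝ 1 K ∧ K 0 = 0 ∧
      ∃ (L β : ℝ), 0 < β ∧ β < 1 ∧
        ∀ (x0 e0 : Euc N) (t : ℕ),
          erasureExp p t (fun ξ => ‖errSeqLin A C K x0 e0 ξ (t + 1)‖ ^ 2) ≤
            L * β ^ t * ‖e0‖ ^ 2) :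
    (1 - p) ^ M * A.det ^ 2 < 1 ∧
    (1 - p) ^ M * (((A.charpoly.aroots ℂ).map (fun z : ℂ => ‖z‖)).prod) ^ 2 < 1 :=
  linear_mse_necessary_condition_general hMN A C p hp0 hp1 hstable

end
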